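/- Knot insertion preserves the curve: with the coefficients α_i defined by α_i = 1 for i ≤ q−p, α_i = (ξ̄−ξ_i)/(ξ_{i+p}−ξ_i) for q−p+1 ≤ i ≤ q, and α_i = 0 for i ≥ q+1, and new control points x̄_i = (1−α_i) x_{i−1} + α_i x_i, the B-spline curve over the refined knot vector (with ξ̄ inserted between ξ_q and ξ_{q+1}) equals the original curve: Σ_{i=1}^n N^p_i(ξ) x_i = Σ_{i=1}^{n+1} N̄^p_i(ξ) x̄_i for all ξ. -/

import Mathlib

/-!
Boehm's relation `N^s_i = α^s_i N̄^s_i + (1 - α^s_{i+1}) N̄^s_{i+1}`, with `α^s` the insertion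
coefficients for degree `s`, is proved by induction on `s`. Away from the new knot the knots of
`N^s_i` are those of `N̄^s_i` or of `N̄^s_{i+1}`. Near it, substituting the induction hypothesis
into both Cox–de Boor recursions leaves `N̄^s_i`, `N̄^s_{i+1}`, `N̄^s_{i+2}` on both sides, and
their coefficients agree by rational identities in the knots; whenever a denominator may vanish,
the basis function it multiplies lives on an empty span. Pairing Boehm's relation with the control
points and shifting the index gives the curve identity, the boundary terms vanishing since
`α_1 = 1` and `α_{n+1} = 0`.
-/

/-- Cox–de Boor recursion for B-spline basis functions on a knot vector `ξ`
(1-indexed). Division by zero in Lean gives `0`, which implements the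
convention `0/0 = 0`. -/
noncomputable def bspline (ξ : ℕ → ℝ) : ℕ → ℕ → ℝ → ℝ
  | 0, i, x => if ξ i ≤ x ∧ x < ξ (i + 1) then 1 else 0
  | p + 1, i, x =>
      (x - ξ i) / (ξ (i + p + 1) - ξ i) * bspline ξ p i x
      + (ξ (i + p + 2) - x) / (ξ (i + p + 2) - ξ (i + 1)) * bspline ξ p (i + 1) x

open Finset

theorem bspline_congr {ξ η : ℕ → ℝ} {s i j : ℕ} (h : ∀ k ≤ s + 1, ξ (i + k) = η (j + k))
    (t : ℝ) : bspline ξ s i t = bspline η s j t := by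
  induction s generalizing i j with
  | zero => simp only [bspline, show ξ i = η j from h 0 (by omega), h 1 le_rfl]
  | succ s ih =>
    have h' : ∀ k ≤ s + 1, ξ (i + 1 + k) = η (j + 1 + k) := fun k hk => by
      simpa only [add_right_comm _ 1 k, add_assoc] using h (k + 1) (by omega)
    simp only [bspline, ih fun k hk => h k (by omega), ih h', show ξ i = η j from h 0 (by omega),
      h 1 (by omega), show ξ (i + s + 1) = η (j + s + 1) from h (s + 1) le_self_add,
      show ξ (i + s + 2) = η (j + s + 2) from h (s + 2) le_rfl]

theorem bspline_eq_zero_of_knot_eq {ξ : ℕ → ℝ} (hξ : Monotone ξ) {s i : ℕ}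
    (h : ξ i = ξ (i + s + 1)) (t : ℝ) : bspline ξ s i t = 0 := by
  cases s with
  | zero => simp [bspline, ← h]
  | succ s =>
    replace h : ξ i = ξ (i + s + 2) := h
    have e1 : ξ (i + s + 1) - ξ i = 0 := by
      linarith [hξ (show i ≤ i + s + 1 by omega), hξ (show i + s + 1 ≤ i + s + 2 by omega)]
    have e2 : ξ (i + s + 2) - ξ (i + 1) = 0 := by
      linarith [hξ (show i ≤ i + 1 by omega), hξ (show i + 1 ≤ i + s + 2 by omega)]
    simp only [bspline, e1, e2, div_zero, zero_mul, add_zero]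

theorem sum_Icc_smul_eq_of_refinement {V : Type*} [AddCommGroup V] [Module ℝ V] (N M a : ℕ → ℝ)
    (x : ℕ → V) (hN : ∀ i, N i = a i * M i + (1 - a (i + 1)) * M (i + 1)) (ha : a 1 = 1)
    (n : ℕ) : ∑ i ∈ Icc 1 n, N i • x i
      = ∑ i ∈ Icc 1 (n + 1), M i • ((1 - a i) • x (i - 1) + a i • x i)
        - (a (n + 1) * M (n + 1)) • x (n + 1) := by
  induction n with
  | zero => simp [ha]
  | succ n ih =>
    rw [sum_Icc_succ_top (by omega), ih, sum_Icc_succ_top (show 1 ≤ n + 1 + 1 by omega), hN,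
      add_tsub_cancel_right]
    module

noncomputable def insertCoeff (ξ : ℕ → ℝ) (q : ℕ) (b : ℝ) (s i : ℕ) : ℝ :=
  if i + s ≤ q then 1 else if i ≤ q then (b - ξ i) / (ξ (i + s) - ξ i) else 0

section insertCoeff

variable {ξ : ℕ → ℝ} {q : ℕ} {b : ℝ} {s i : ℕ}

theorem insertCoeff_of_add_le (h : i + s ≤ q) : insertCoeff ξ q b s i = 1 := if_pos h

theorem insertCoeff_of_lt_add (h₁ : q < i + s) (h₂ : i ≤ q) :
    insertCoeff ξ q b s i = (b - ξ i) / (ξ (i + s) - ξ i) := by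
  rw [insertCoeff, if_neg h₁.not_ge, if_pos h₂]

theorem insertCoeff_of_lt (h : q < i) : insertCoeff ξ q b s i = 0 := by
  rw [insertCoeff, if_neg (by omega), if_neg h.not_ge]

end insertCoeff

structure IsKnotInsertion (ξ ξb : ℕ → ℝ) (q : ℕ) (b : ℝ) : Prop where
  monotone : Monotone ξ
  le_new : ξ q ≤ b
  new_lt : b < ξ (q + 1)
  eq_of_le : ∀ i ≤ q, ξb i = ξ i
  eq_new : ξb (q + 1) = b
  eq_pred : ∀ i, q + 2 ≤ i → ξb i = ξ (i - 1)

namespace IsKnotInsertion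

variable {ξ ξb : ℕ → ℝ} {q : ℕ} {b : ℝ}

theorem eq_succ (h : IsKnotInsertion ξ ξb q b) {i : ℕ} (hi : q < i) : ξb (i + 1) = ξ i :=
  h.eq_pred (i + 1) (by omega)

theorem new_lt_knot (h : IsKnotInsertion ξ ξb q b) {j : ℕ} (hj : q < j) : b < ξ j :=
  h.new_lt.trans_le (h.monotone hj)

theorem knot_lt_knot (h : IsKnotInsertion ξ ξb q b) {k j : ℕ} (hk : k ≤ q) (hj : q < j) :
    ξ k < ξ j :=
  ((h.monotone hk).trans h.le_new).trans_lt (h.new_lt_knot hj)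

theorem monotone_new (h : IsKnotInsertion ξ ξb q b) : Monotone ξb := by
  refine monotone_nat_of_le_succ fun i => ?_
  rcases lt_trichotomy i q with hi | rfl | hi
  · rw [h.eq_of_le i hi.le, h.eq_of_le (i + 1) hi]
    exact h.monotone (Nat.le_succ i)
  · rw [h.eq_of_le i le_rfl, h.eq_new]
    exact h.le_new
  · rw [h.eq_succ hi]
    obtain rfl | hi := Nat.succ_le_iff.2 hi |>.eq_or_lt
    · exact h.eq_new.trans_le h.new_lt.le
    · exact (h.eq_pred i hi).trans_le (h.monotone (Nat.sub_le i 1))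

variable {s i : ℕ}

theorem bspline_new_eq_of_add_le (h : IsKnotInsertion ξ ξb q b) (hi : i + s + 1 ≤ q) (t : ℝ) :
    bspline ξb s i t = bspline ξ s i t :=
  bspline_congr (fun k hk => h.eq_of_le _ (by omega)) t

theorem bspline_new_succ_eq_of_lt (h : IsKnotInsertion ξ ξb q b) (hi : q < i) (t : ℝ) :
    bspline ξb s (i + 1) t = bspline ξ s i t :=
  bspline_congr (fun k _ => by rw [add_right_comm]; exact h.eq_succ (by omega)) t

theorem bspline_zero_eq_add (h : IsKnotInsertion ξ ξb q b) (t : ℝ) :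
    bspline ξ 0 q t = bspline ξb 0 q t + bspline ξb 0 (q + 1) t := by
  simp only [bspline, h.eq_of_le q le_rfl, h.eq_new, h.eq_succ (by omega : q < q + 1)]
  rcases lt_or_ge t b with ht | ht
  · simp [ht, ht.trans h.new_lt, ht.not_ge]
  · simp [ht, h.le_new.trans ht, ht.not_gt]

theorem sub_ne_zero_of_le_of_lt (h : IsKnotInsertion ξ ξb q b) {k j : ℕ} (hk : k ≤ q)
    (hj : q < j) :
    ξ j - ξ k ≠ 0 :=
  sub_ne_zero.2 (h.knot_lt_knot hk hj).ne'

theorem step_coeff_self (h : IsKnotInsertion ξ ξb q b) (hi : i ≤ q) (t : ℝ) :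
    (t - ξ i) / (ξ (i + s + 1) - ξ i) * (insertCoeff ξ q b s i * bspline ξb s i t)
      = insertCoeff ξ q b (s + 1) i *
        ((t - ξb i) / (ξb (i + s + 1) - ξb i) * bspline ξb s i t) := by
  rw [h.eq_of_le i hi]
  rcases lt_trichotomy (i + s) q with hs | hs | hs
  · rw [insertCoeff_of_add_le hs.le, insertCoeff_of_add_le (by omega), h.eq_of_le _ hs]
    ring
  · rw [insertCoeff_of_add_le hs.le, insertCoeff_of_lt_add (by omega) hi, ← add_assoc, hs,
      h.eq_new]
    rcases eq_or_ne b (ξ i) with hb | hb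
    · rw [bspline_eq_zero_of_knot_eq h.monotone_new (by rw [h.eq_of_le i hi, hs, h.eq_new, hb])]
      ring
    · field_simp [sub_ne_zero.2 hb, h.sub_ne_zero_of_le_of_lt hi q.lt_succ_self]
  · rw [insertCoeff_of_lt_add hs hi, insertCoeff_of_lt_add (by omega) hi, ← add_assoc,
      h.eq_succ hs]
    ring

theorem step_coeff_succ (h : IsKnotInsertion ξ ξb q b) (hi : i ≤ q) (his : q ≤ i + s + 1)
    (t : ℝ) :
    (t - ξ i) / (ξ (i + s + 1) - ξ i) *
        ((1 - insertCoeff ξ q b s (i + 1)) * bspline ξb s (i + 1) t)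
      + (ξ (i + s + 2) - t) / (ξ (i + s + 2) - ξ (i + 1)) *
        (insertCoeff ξ q b s (i + 1) * bspline ξb s (i + 1) t)
      = insertCoeff ξ q b (s + 1) i *
          ((ξb (i + s + 2) - t) / (ξb (i + s + 2) - ξb (i + 1)) * bspline ξb s (i + 1) t)
        + (1 - insertCoeff ξ q b (s + 1) (i + 1)) *
          ((t - ξb (i + 1)) / (ξb (i + s + 2) - ξb (i + 1)) * bspline ξb s (i + 1) t) := by
  rcases lt_or_eq_of_le his with hs | hs
  · rcases lt_or_eq_of_le hi with hi' | rfl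
    · rw [insertCoeff_of_lt_add (by omega) hi', insertCoeff_of_lt_add (by omega) hi,
        insertCoeff_of_lt_add (by omega) hi', h.eq_of_le _ hi', h.eq_succ hs]
      simp only [← add_assoc, add_right_comm i 1 s]
      field_simp [h.sub_ne_zero_of_le_of_lt hi hs, h.sub_ne_zero_of_le_of_lt hi' hs,
        h.sub_ne_zero_of_le_of_lt hi' (show q < i + s + 2 by omega)]
      ring
    · rw [insertCoeff_of_lt (by omega : i < i + 1), insertCoeff_of_lt_add (by omega) le_rfl,
        insertCoeff_of_lt (by omega : i < i + 1), h.eq_new, h.eq_succ hs, ← add_assoc]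
      field_simp [h.sub_ne_zero_of_le_of_lt hi hs, sub_ne_zero.2 (h.new_lt_knot hs).ne']
      ring
  · rw [insertCoeff_of_add_le (by omega : i + 1 + s ≤ q),
      insertCoeff_of_add_le (by omega : i + (s + 1) ≤ q),
      insertCoeff_of_lt_add (by omega : q < i + 1 + (s + 1)) (by omega : i + 1 ≤ q),
      h.eq_of_le (i + 1) (by omega), show i + s + 2 = q + 1 by omega,
      show i + 1 + (s + 1) = q + 1 by omega, h.eq_new]
    rcases eq_or_ne b (ξ (i + 1)) with hb | hb
    · rw [bspline_eq_zero_of_knot_eq h.monotone_new (by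
        rw [h.eq_of_le (i + 1) (by omega), show i + 1 + s + 1 = q + 1 by omega, h.eq_new, hb])]
      ring
    · field_simp [sub_ne_zero.2 hb,
        h.sub_ne_zero_of_le_of_lt (by omega : i + 1 ≤ q) q.lt_succ_self]
      ring

theorem step_coeff_add_two (h : IsKnotInsertion ξ ξb q b) (hi : i ≤ q) (his : q ≤ i + s + 1)
    (t : ℝ) :
    (ξ (i + s + 2) - t) / (ξ (i + s + 2) - ξ (i + 1)) *
        ((1 - insertCoeff ξ q b s (i + 2)) * bspline ξb s (i + 2) t)
      = (1 - insertCoeff ξ q b (s + 1) (i + 1)) *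
          ((ξb (i + s + 3) - t) / (ξb (i + s + 3) - ξb (i + 2)) * bspline ξb s (i + 2) t) := by
  have hlast : q < i + s + 2 := by omega
  rw [h.eq_succ hlast]
  rcases lt_trichotomy (i + 1) q with hi' | hi' | hi'
  · rw [insertCoeff_of_lt_add (by omega) hi', insertCoeff_of_lt_add (by omega) hi'.le,
      h.eq_of_le _ hi', show i + 2 + s = i + s + 2 by omega,
      show i + 1 + (s + 1) = i + s + 2 by omega]
    field_simp [h.sub_ne_zero_of_le_of_lt hi'.le hlast, h.sub_ne_zero_of_le_of_lt hi' hlast]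
    ring
  · rw [insertCoeff_of_lt (by omega : q < i + 2), insertCoeff_of_lt_add (by omega) hi'.le,
      show i + 2 = q + 1 by omega, h.eq_new, show i + 1 + (s + 1) = i + s + 2 by omega, hi']
    field_simp [h.sub_ne_zero_of_le_of_lt le_rfl hlast, sub_ne_zero.2 (h.new_lt_knot hlast).ne']
    ring
  · rw [insertCoeff_of_lt (by omega : q < i + 2), insertCoeff_of_lt hi',
      h.eq_succ (by omega : q < i + 1)]
    ring

theorem bspline_eq_of_add_le_or_lt (h : IsKnotInsertion ξ ξb q b) (hi : i + s + 1 ≤ q ∨ q < i)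
    (t : ℝ) : bspline ξ s i t = insertCoeff ξ q b s i * bspline ξb s i t
      + (1 - insertCoeff ξ q b s (i + 1)) * bspline ξb s (i + 1) t := by
  rcases hi with hi | hi
  · rw [insertCoeff_of_add_le (by omega), insertCoeff_of_add_le (by omega),
      h.bspline_new_eq_of_add_le hi]
    ring
  · rw [insertCoeff_of_lt hi, insertCoeff_of_lt (by omega), h.bspline_new_succ_eq_of_lt hi]
    ring

theorem bspline_eq (h : IsKnotInsertion ξ ξb q b) (s i : ℕ) (t : ℝ) :
    bspline ξ s i t = insertCoeff ξ q b s i * bspline ξb s i t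
      + (1 - insertCoeff ξ q b s (i + 1)) * bspline ξb s (i + 1) t := by
  induction s generalizing i with
  | zero =>
    by_cases hi : i + 0 + 1 ≤ q ∨ q < i
    · exact h.bspline_eq_of_add_le_or_lt hi t
    obtain rfl : i = q := by omega
    rw [insertCoeff_of_add_le (by omega : i + 0 ≤ i), insertCoeff_of_lt (by omega : i < i + 1),
      h.bspline_zero_eq_add]
    ring
  | succ s ih =>
    by_cases hi : i + (s + 1) + 1 ≤ q ∨ q < i
    · exact h.bspline_eq_of_add_le_or_lt hi t
    have hi₁ : i ≤ q := by omega
    have hi₂ : q ≤ i + s + 1 := by omega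
    simp only [bspline, ih i, ih (i + 1), show i + 1 + s + 1 = i + s + 2 by omega,
      show i + 1 + s + 2 = i + s + 3 by omega, show i + 1 + 1 = i + 2 by omega]
    linear_combination
      h.step_coeff_self hi₁ t + h.step_coeff_succ hi₁ hi₂ t + h.step_coeff_add_two hi₁ hi₂ t

end IsKnotInsertion

/-- Knot insertion preserves the curve: inserting a knot `b ∈ [ξ_q, ξ_{q+1})`
and forming the new control points `x̄_i = (1 - α_i) x_{i-1} + α_i x_i`
with the standard coefficients `α_i` leaves the B-spline curve unchanged. -/
theorem knot_insertion_preserves_curve {V : Type*} [AddCommGroup V] [Module ℝ V]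
    (ξ ξb : ℕ → ℝ) (n p q : ℕ) (b : ℝ)
    (hmono : Monotone ξ)
    (hq1 : p + 1 ≤ q) (hq2 : q ≤ n)
    (hb1 : ξ q ≤ b) (hb2 : b < ξ (q + 1))
    (hξb1 : ∀ i ≤ q, ξb i = ξ i) (hξb2 : ξb (q + 1) = b)
    (hξb3 : ∀ i, q + 2 ≤ i → ξb i = ξ (i - 1))
    (α : ℕ → ℝ)
    (hα1 : ∀ i, i + p ≤ q → α i = 1)
    (hα2 : ∀ i, q < i + p → i ≤ q → α i = (b - ξ i) / (ξ (i + p) - ξ i))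
    (hα3 : ∀ i, q < i → α i = 0)
    (x xb : ℕ → V)
    (hxb : ∀ i, 1 ≤ i → i ≤ n + 1 → xb i = (1 - α i) • x (i - 1) + α i • x i) :
    ∀ t : ℝ,
      ∑ i ∈ Finset.Icc 1 n, bspline ξ p i t • x i
        = ∑ i ∈ Finset.Icc 1 (n + 1), bspline ξb p i t • xb i := by
  intro t
  have h : IsKnotInsertion ξ ξb q b := ⟨hmono, hb1, hb2, hξb1, hξb2, hξb3⟩
  obtain rfl : α = insertCoeff ξ q b p := funext fun i => by
    rw [insertCoeff]
    split_ifs with h₁ h₂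
    exacts [hα1 i h₁, hα2 i (by omega) h₂, hα3 i (by omega)]
  rw [sum_Icc_smul_eq_of_refinement _ _ _ x (h.bspline_eq p · t)
      (insertCoeff_of_add_le (by omega)) n,
    insertCoeff_of_lt (by omega : q < n + 1), zero_mul, zero_smul, sub_zero]
  refine sum_congr rfl fun i hi => ?_
  rw [hxb i (mem_Icc.1 hi).1 (mem_Icc.1 hi).2]
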